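/- For every symmetric norm ‖·‖ on ℝⁿ and all f, g ∈ ℝⁿ, the Leibniz inequality ‖fg − E(fg)‖ ≤ ‖g‖_∞ ‖f − E f‖ + ‖f‖_∞ ‖g − E g‖ holds, where fg is the pointwise product and E x is the constant vector (1/n)(∑ᵢ xᵢ)𝟏. -/

import Mathlib

/-!
Write `T_h x` for the vector with entries `(2n)⁻¹ ∑ⱼ (hᵢ + hⱼ)(xᵢ - xⱼ)`. Expanding gives
`fg - E(fg) = T_g (f - Ef) + T_f (g - Eg)`, so it suffices to show `N (T_h x) ≤ ‖h‖_∞ N x`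
whenever `∑ x = 0`. As `h ↦ N (T_h x)` is convex, it is enough to check this at the vertices
`h = c ε` (`ε` a sign vector) of the cube `‖h‖_∞ ≤ c`. There `T_ε x = ε ⊙ (A x)` for a doubly
stochastic `A`, which by Birkhoff's theorem is an average of permutation matrices, and these
preserve the symmetric norm `N`.
-/

open Finset

/-- The symmetric matrix `Θ_x`: off-diagonal entries `(xᵢ+xⱼ)/(2n)`, diagonal chosen
so that every row sums to zero. -/
noncomputable def Theta (n : ℕ) (x : Fin n → ℝ) : Matrix (Fin n) (Fin n) ℝ :=
  fun i j =>
    if i = j then -(∑ k ∈ Finset.univ.erase i, (x i + x k) / (2 * n))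
    else (x i + x j) / (2 * n)

/-- `I_x = Iₙ + Θ_x`. -/
noncomputable def Imat (n : ℕ) (x : Fin n → ℝ) : Matrix (Fin n) (Fin n) ℝ :=
  1 + Theta n x

/-- `E f`: the constant vector whose entries all equal the mean of `f`. -/
noncomputable def meanVec (n : ℕ) (f : Fin n → ℝ) : Fin n → ℝ :=
  fun _ => (∑ i, f i) / n

/-- The sup norm `‖x‖_∞`. -/
noncomputable def linf (n : ℕ) (x : Fin n → ℝ) : ℝ :=
  sSup (Set.range fun i => |x i|)

/-- The Ky Fan `k`-norm: the sum of the `k` largest absolute values of the entries,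
i.e. the maximum of `∑_{i ∈ S} |xᵢ|` over subsets `S` of cardinality `k`. -/
noncomputable def kyFan (n k : ℕ) (x : Fin n → ℝ) : ℝ :=
  sSup ((fun S : Finset (Fin n) => ∑ i ∈ S, |x i|) '' {S | S.card = k})

/-- The dual Ky Fan `k`-norm: `max(‖x‖_∞, ‖x‖₁ / k)`. -/
noncomputable def kyFanDual (n k : ℕ) (x : Fin n → ℝ) : ℝ :=
  max (linf n x) ((∑ i, |x i|) / k)

/-- A symmetric norm on `ℝⁿ`: a norm invariant under coordinate permutations
and sign changes. -/
structure IsSymmNorm (n : ℕ) (N : (Fin n → ℝ) → ℝ) : Prop where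
  add_le : ∀ x y, N (x + y) ≤ N x + N y
  smul : ∀ (c : ℝ) (x), N (c • x) = |c| * N x
  pos : ∀ x, x ≠ 0 → 0 < N x
  perm : ∀ (σ : Equiv.Perm (Fin n)) (x), N (x ∘ σ) = N x
  sign : ∀ (ε x : Fin n → ℝ), (∀ i, ε i = 1 ∨ ε i = -1) → N (ε * x) = N x

open Matrix

variable {n : ℕ}

namespace IsSymmNorm

variable {N : (Fin n → ℝ) → ℝ}

theorem convexOn (hN : IsSymmNorm n N) : ConvexOn ℝ Set.univ N := by
  refine ⟨convex_univ, fun x _ y _ a b ha hb _ => ?_⟩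
  calc N (a • x + b • y) ≤ N (a • x) + N (b • y) := hN.add_le _ _
    _ = a • N x + b • N y := by
      rw [hN.smul, hN.smul, abs_of_nonneg ha, abs_of_nonneg hb, smul_eq_mul, smul_eq_mul]

theorem apply_mulVec_le (hN : IsSymmNorm n N) {A : Matrix (Fin n) (Fin n) ℝ}
    (hA : A ∈ doublyStochastic ℝ (Fin n)) (x : Fin n → ℝ) : N (A *ᵥ x) ≤ N x := by
  obtain ⟨w, hw₀, hw₁, rfl⟩ := exists_eq_sum_perm_of_mem_doublyStochastic hA
  calc N ((∑ σ, w σ • σ.permMatrix ℝ) *ᵥ x) = N (∑ σ, w σ • (x ∘ σ)) := by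
        simp only [sum_mulVec, smul_mulVec, permMatrix_mulVec]
    _ ≤ ∑ σ, w σ • N (x ∘ σ) :=
        hN.convexOn.map_sum_le (fun σ _ => hw₀ σ) hw₁ (fun _ _ => Set.mem_univ _)
    _ = N x := by simp only [hN.perm, smul_eq_mul, ← sum_mul, hw₁, one_mul]

end IsSymmNorm

noncomputable def leibnizOp (n : ℕ) (x : Fin n → ℝ) : (Fin n → ℝ) →ₗ[ℝ] Fin n → ℝ where
  toFun h i := (∑ j, (h i + h j) * (x i - x j)) / (2 * n)
  map_add' h h' := by
    ext i
    simp only [Pi.add_apply, ← add_div, ← sum_add_distrib]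
    congr 1
    exact sum_congr rfl fun j _ => by ring
  map_smul' c h := by
    ext i
    simp only [Pi.smul_apply, smul_eq_mul, RingHom.id_apply, mul_sum, mul_div_assoc']
    congr 1
    exact sum_congr rfl fun j _ => by ring

theorem leibnizOp_apply (x h : Fin n → ℝ) (i : Fin n) :
    leibnizOp n x h i = (∑ j, (h i + h j) * (x i - x j)) / (2 * n) := rfl

theorem leibnizOp_sub_meanVec (x : Fin n → ℝ) :
    leibnizOp n (x - meanVec n x) = leibnizOp n x := by
  refine LinearMap.ext fun h => funext fun i => ?_
  simp only [leibnizOp_apply, Pi.sub_apply, meanVec, sub_sub_sub_cancel_right]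

theorem sum_sub_meanVec (x : Fin n → ℝ) : ∑ i, (x - meanVec n x) i = 0 := by
  rcases n.eq_zero_or_pos with rfl | hn
  · simp
  · simp only [Pi.sub_apply, meanVec, sum_sub_distrib, sum_const, card_univ, Fintype.card_fin,
      nsmul_eq_mul]
    rw [mul_div_cancel₀ _ (by positivity), sub_self]

theorem mul_sub_meanVec_mul (f g : Fin n → ℝ) :
    f * g - meanVec n (f * g) = leibnizOp n f g + leibnizOp n g f := by
  ext i
  have hn : (n : ℝ) ≠ 0 := Nat.cast_ne_zero.2 (Fin.pos i).ne'
  simp only [Pi.sub_apply, Pi.add_apply, Pi.mul_apply, meanVec, leibnizOp_apply, ← add_div,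
    ← sum_add_distrib]
  have hterm : ∀ j, (g i + g j) * (f i - f j) + (f i + f j) * (g i - g j)
      = 2 * (f i * g i) - 2 * (f * g) j := fun j => by simp only [Pi.mul_apply]; ring
  simp only [hterm, sum_sub_distrib, ← mul_sum, sum_const, card_univ, Fintype.card_fin,
    nsmul_eq_mul]
  field_simp
  simp only [Pi.mul_apply]

/-- For a sign vector `ε` one has `(εᵢ + εⱼ) / 2 = εᵢ [εᵢ = εⱼ]`, and `∑ x = 0` turns
`-∑_{εⱼ = εᵢ} xⱼ` into `∑_{εⱼ ≠ εᵢ} xⱼ`; this gives `T_ε x = ε ⊙ (signAvgMatrix n ε *ᵥ x)`. -/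
noncomputable def signAvgMatrix (n : ℕ) (ε : Fin n → ℝ) : Matrix (Fin n) (Fin n) ℝ :=
  of fun i j => ((if i = j then (#{k | ε i = ε k} : ℝ) else 0) + if ε i ≠ ε j then 1 else 0) / n

theorem signAvgMatrix_mem_doublyStochastic (ε : Fin n → ℝ) :
    signAvgMatrix n ε ∈ doublyStochastic ℝ (Fin n) := by
  have hrow : ∀ i, ∑ j, signAvgMatrix n ε i j = 1 := fun i => by
    have hn : (n : ℝ) ≠ 0 := Nat.cast_ne_zero.2 (Fin.pos i).ne'
    have hcard : #{k | ε i = ε k} + #{k | ε i ≠ ε k} = n :=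
      (card_filter_add_card_filter_not _).trans (card_fin n)
    simp only [signAvgMatrix, of_apply, ← sum_div, sum_add_distrib, sum_ite_eq, mem_univ, if_true,
      sum_boole]
    rw [div_eq_one_iff_eq hn]
    exact_mod_cast hcard
  have hsymm : ∀ i j, signAvgMatrix n ε i j = signAvgMatrix n ε j i := fun i j => by
    rcases eq_or_ne i j with rfl | hij
    · rfl
    · simp only [signAvgMatrix, of_apply, if_neg hij, if_neg hij.symm, ne_comm]
  rw [mem_doublyStochastic_iff_sum]
  refine ⟨fun i j => by simp only [signAvgMatrix, of_apply]; positivity, hrow, fun j => ?_⟩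
  simp only [hsymm _ j, hrow]

theorem leibnizOp_sign_eq {x ε : Fin n → ℝ} (hε : ∀ i, ε i = 1 ∨ ε i = -1)
    (hx : ∑ i, x i = 0) : leibnizOp n x ε = ε * (signAvgMatrix n ε *ᵥ x) := by
  ext i
  have hn : (n : ℝ) ≠ 0 := Nat.cast_ne_zero.2 (Fin.pos i).ne'
  have hsign : ∀ j, ε i + ε j = 2 * ε i * if ε i = ε j then 1 else 0 := fun j => by
    rcases hε i with hi | hi <;> rcases hε j with hj | hj <;> norm_num [hi, hj]
  have hsplit : ∑ j, (if ε i = ε j then x j else 0) + ∑ j, (if ε i ≠ ε j then x j else 0) = 0 := by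
    rw [← sum_add_distrib, ← hx]
    exact sum_congr rfl fun j _ => by split_ifs <;> simp_all
  have hsame : ∑ j, (if ε i = ε j then x i - x j else 0)
      = #{k | ε i = ε k} * x i - ∑ j, if ε i = ε j then x j else 0 := by
    rw [← sum_filter, sum_sub_distrib, sum_const, nsmul_eq_mul, sum_filter]
  simp only [leibnizOp_apply, hsign, mul_assoc, ← mul_sum, Pi.mul_apply, mulVec, dotProduct,
    signAvgMatrix, of_apply, add_mul, div_mul_eq_mul_div, ← sum_div, sum_add_distrib, ite_mul,
    zero_mul, one_mul, sum_ite_eq, mem_univ, if_true]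
  rw [hsame]
  field_simp
  linear_combination -ε i * hsplit

theorem abs_le_linf (x : Fin n → ℝ) (i : Fin n) : |x i| ≤ linf n x :=
  le_csSup (Set.finite_range _).bddAbove ⟨i, rfl⟩

theorem linf_nonneg (x : Fin n → ℝ) : 0 ≤ linf n x :=
  Real.sSup_nonneg <| by rintro _ ⟨i, rfl⟩; exact abs_nonneg _

namespace IsSymmNorm

variable {N : (Fin n → ℝ) → ℝ}

theorem leibnizOp_sign_le (hN : IsSymmNorm n N) {x ε : Fin n → ℝ}
    (hε : ∀ i, ε i = 1 ∨ ε i = -1) (hx : ∑ i, x i = 0) : N (leibnizOp n x ε) ≤ N x := by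
  rw [leibnizOp_sign_eq hε hx, hN.sign ε _ hε]
  exact hN.apply_mulVec_le (signAvgMatrix_mem_doublyStochastic ε) x

theorem leibnizOp_le (hN : IsSymmNorm n N) {x : Fin n → ℝ} (hx : ∑ i, x i = 0)
    (h : Fin n → ℝ) : N (leibnizOp n x h) ≤ linf n h * N x := by
  set c := linf n h
  have hhull : h ∈ convexHull ℝ (Set.univ.pi fun _ => {-c, c}) := by
    rw [convexHull_pi]
    intro i _
    rw [convexHull_pair, segment_eq_uIcc]
    exact Set.Icc_subset_uIcc (abs_le.1 (abs_le_linf h i))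
  obtain ⟨y, hy, hle⟩ := (hN.convexOn.comp_linearMap (leibnizOp n x)).exists_ge_of_mem_convexHull
    (Set.subset_univ _) hhull
  set ε : Fin n → ℝ := fun i => if y i = c then 1 else -1
  have hyε : y = c • ε := funext fun i => by
    simp only [Pi.smul_apply, smul_eq_mul, ε]
    split_ifs with hic
    · rw [hic, mul_one]
    · rw [(hy i trivial).resolve_right hic, mul_neg_one]
  have hε : ∀ i, ε i = 1 ∨ ε i = -1 := fun i => by
    by_cases hic : y i = c <;> simp [ε, hic]
  calc N (leibnizOp n x h) ≤ N (leibnizOp n x y) := hle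
    _ = c * N (leibnizOp n x ε) := by
      rw [hyε, map_smul, hN.smul, abs_of_nonneg (linf_nonneg h)]
    _ ≤ c * N x := mul_le_mul_of_nonneg_left (hN.leibnizOp_sign_le hε hx) (linf_nonneg h)

end IsSymmNorm

theorem stmt_7_general (n : ℕ) (N : (Fin n → ℝ) → ℝ) (hN : IsSymmNorm n N)
    (f g : Fin n → ℝ) :
    N (f * g - meanVec n (f * g))
      ≤ linf n g * N (f - meanVec n f) + linf n f * N (g - meanVec n g) := by
  rw [mul_sub_meanVec_mul, ← leibnizOp_sub_meanVec f, ← leibnizOp_sub_meanVec g]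
  calc _ ≤ N (leibnizOp n (f - meanVec n f) g) + N (leibnizOp n (g - meanVec n g) f) :=
        hN.add_le _ _
    _ ≤ _ := add_le_add (hN.leibnizOp_le (sum_sub_meanVec f) g)
        (hN.leibnizOp_le (sum_sub_meanVec g) f)

/-- Theorem 2.6: the Leibniz inequality for symmetric norms. -/
theorem stmt_7 (n : ℕ) (hn : 0 < n) (N : (Fin n → ℝ) → ℝ) (hN : IsSymmNorm n N)
    (f g : Fin n → ℝ) :
    N (f * g - meanVec n (f * g))
      ≤ linf n g * N (f - meanVec n f) + linf n f * N (g - meanVec n g) :=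
  stmt_7_general n N hN f g
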